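/- Let E be a countable Polish space. Then there exists a countable ordinal α such that for every compact countable subset K of E, K^(α) = ∅. -/

import Mathlib

/-!
Since `E` is closed in itself, its Cantor–Bendixson derivatives form an antitone family of closed
sets. In a countable space such a family cannot shrink at every stage below `ω₁` (the removed
points would give an injection of `ω₁` into `E`), so `E^(α+1) = E^(α)` for some countable `α`.
Then `E^(α)` is perfect; a nonempty perfect subset of a Polish space contains a copy of the Cantor
space, so the countability of `E` forces `E^(α) = ∅`, and hence `K^(α) ⊆ E^(α) = ∅` for every `K`.
-/

/-- The Cantor-Bendixson derivative of a set, by transfinite recursion. -/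
noncomputable def cbDeriv {X : Type*} [TopologicalSpace X] (A : Set X) (o : Ordinal) : Set X :=
  Ordinal.limitRecOn o A (fun _ ih => derivedSet ih)
    (fun o _ ih => ⋂ (b : Set.Iio o), ih b.1 b.2)

/-- `IsCB A α p` : the Cantor-Bendixson characteristic of `A` is `(α, p)`,
i.e. `α` is the least ordinal with `A^(α)` finite, and `p = |A^(α)|`. -/
def IsCB {X : Type*} [TopologicalSpace X] (A : Set X) (α : Ordinal) (p : ℕ) : Prop :=
  (cbDeriv A α).Finite ∧ (∀ β < α, ¬ (cbDeriv A β).Finite) ∧ (cbDeriv A α).ncard = p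

open Set Cardinal Order

section cbDeriv

variable {X : Type*} [TopologicalSpace X] {A B : Set X}

lemma cbDeriv_zero (A : Set X) : cbDeriv A 0 = A :=
  Ordinal.limitRecOn_zero _ _ _

lemma cbDeriv_succ (A : Set X) (o : Ordinal) :
    cbDeriv A (succ o) = derivedSet (cbDeriv A o) := by
  rw [succ_eq_add_one]
  exact Ordinal.limitRecOn_add_one _ _ _ _

lemma cbDeriv_limit (A : Set X) {o : Ordinal} (ho : IsSuccLimit o) :
    cbDeriv A o = ⋂ b : Iio o, cbDeriv A b :=
  Ordinal.limitRecOn_limit _ _ _ _ ho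

lemma cbDeriv_mono (h : A ⊆ B) (o : Ordinal) : cbDeriv A o ⊆ cbDeriv B o := by
  induction o using Ordinal.limitRecOn with
  | zero => simpa only [cbDeriv_zero] using h
  | add_one o ih =>
    rw [← succ_eq_add_one, cbDeriv_succ, cbDeriv_succ]
    exact derivedSet_mono _ _ ih
  | limit o ho ih =>
    rw [cbDeriv_limit A ho, cbDeriv_limit B ho]
    exact iInter_mono fun b => ih b.1 b.2

lemma perfect_cbDeriv_of_succ_eq {o : Ordinal} (h : cbDeriv A (succ o) = cbDeriv A o) :
    Perfect (cbDeriv A o) := by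
  rw [perfect_iff_eq_derivedSet, ← cbDeriv_succ, h]

variable [T1Space X]

lemma isClosed_cbDeriv (hA : IsClosed A) (o : Ordinal) : IsClosed (cbDeriv A o) := by
  induction o using Ordinal.limitRecOn with
  | zero => rwa [cbDeriv_zero]
  | add_one o ih => rw [← succ_eq_add_one, cbDeriv_succ]; exact isClosed_derivedSet _
  | limit o ho ih => rw [cbDeriv_limit A ho]; exact isClosed_iInter fun b => ih b.1 b.2

lemma cbDeriv_succ_subset (hA : IsClosed A) (o : Ordinal) : cbDeriv A (succ o) ⊆ cbDeriv A o := by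
  rw [cbDeriv_succ]
  exact (derivedSet_subset_closure _).trans (isClosed_cbDeriv hA o).closure_subset

lemma cbDeriv_antitone (hA : IsClosed A) : Antitone (cbDeriv A) := by
  intro β α hβα
  induction α using Ordinal.limitRecOn with
  | zero => rw [nonpos_iff_eq_zero.mp hβα]
  | add_one o ih =>
    rw [← succ_eq_add_one] at hβα ⊢
    rcases le_succ_iff_eq_or_le.mp hβα with rfl | hβo
    · exact subset_rfl
    · exact (cbDeriv_succ_subset hA o).trans (ih hβo)
  | limit o ho ih =>
    rcases hβα.eq_or_lt with rfl | hβo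
    · exact subset_rfl
    · rw [cbDeriv_limit A ho]
      exact iInter_subset _ (⟨β, hβo⟩ : Iio o)

end cbDeriv

lemma uncountable_Iio_ord_aleph_one : Uncountable (Iio (ℵ₁).ord : Set Ordinal) := by
  rw [← aleph0_lt_mk_iff, mk_Iio_ordinal]
  simp

lemma uncountable_nat_to_bool : Uncountable (ℕ → Bool) := by
  rw [← aleph0_lt_mk_iff]
  simpa using aleph0_lt_continuum

lemma Antitone.exists_lt_ord_aleph_one_succ_eq {X : Type*} [Countable X] {f : Ordinal → Set X}
    (hf : Antitone f) : ∃ α < (ℵ₁).ord, f (succ α) = f α := by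
  by_contra! hne
  have hdiff : ∀ α : Iio (ℵ₁).ord, (f α \ f (succ α)).Nonempty := fun α =>
    sdiff_nonempty.mpr fun hsub => hne α α.2 ((hf (le_succ _)).antisymm hsub)
  choose x hx using hdiff
  have hinj : Function.Injective x := .of_lt_imp_ne fun a b hab hxab =>
    (hx a).2 (hxab ▸ hf (succ_le_of_lt hab) (hx b).1)
  have := uncountable_Iio_ord_aleph_one
  exact not_countable hinj.countable

lemma Perfect.not_countable {X : Type*} [TopologicalSpace X] [PolishSpace X] {C : Set X}
    (hC : Perfect C) (hne : C.Nonempty) : ¬ C.Countable := by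
  let := TopologicalSpace.upgradeIsCompletelyMetrizable X
  obtain ⟨f, hfC, -, hinj⟩ := hC.exists_nat_bool_injection hne
  intro hcount
  have := uncountable_nat_to_bool
  have : Countable C := hcount.to_subtype
  exact _root_.not_countable (hinj.codRestrict fun y => hfC (mem_range_self y)).countable

theorem stmt7 {E : Type*} [TopologicalSpace E] [PolishSpace E] [Countable E] :
    ∃ α : Ordinal, α < (Cardinal.aleph 1).ord ∧
      ∀ K : Set E, IsCompact K → K.Countable → cbDeriv K α = ∅ := by
  obtain ⟨α, hα, hstab⟩ :=
    (cbDeriv_antitone (isClosed_univ (X := E))).exists_lt_ord_aleph_one_succ_eq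
  have hempty : cbDeriv (univ : Set E) α = ∅ := not_nonempty_iff_eq_empty.mp fun hne =>
    (perfect_cbDeriv_of_succ_eq hstab).not_countable hne (to_countable _)
  refine ⟨α, hα, fun K _ _ => subset_empty_iff.mp ?_⟩
  exact hempty ▸ cbDeriv_mono (subset_univ K) α
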